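/- arXiv:1610.04728 — 5 statements merged into one kernel-verified Lean document; each statement's English description precedes it below -/
import Mathlib

section
/- Let K be a field and a ∈ K a nonzero element which is not a root of unity (aⁿ ≠ 1 for every integer n > 0). Let B be an associative K-algebra and let x : ℤ × ℤ → B satisfy x(−p,−q) = x(p,q) for all (p,q) and the product rule x(p,q)·x(r,s) = a^{ps−qr}·x(p+r, q+s) + a^{−(ps−qr)}·x(p−r, q−s) for all integers p, q, r, s. Let [B,B] denote the K-submodule of B spanned by all commutators uv − vu. Then for every q ≠ 0 and every p one has x(p+2, q) − x(p, q) ∈ [B,B], and symmetrically for every p ≠ 0 and every q one has x(p, q+2) − x(p, q) ∈ [B,B]. -/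
lemma fg_zpow_ne_one {K : Type*} [Field K] (a : K) (ha0 : a ≠ 0)
    (ha : ∀ n : ℕ, 0 < n → a ^ n ≠ 1) (n : ℤ) (hn : n ≠ 0) : a ^ n ≠ 1 := by
  rcases lt_trichotomy n 0 with h | h | h
  · intro he
    have h1 : a ^ (-n) = 1 := by
      rw [zpow_neg, he, inv_one]
    have h2 : a ^ (-n).toNat = 1 := by
      rw [← zpow_natCast, Int.toNat_of_nonneg (by omega)]; exact h1
    exact ha (-n).toNat (by omega) h2
  · exact absurd h hn
  · intro he
    have h2 : a ^ n.toNat = 1 := by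
      rw [← zpow_natCast, Int.toNat_of_nonneg (by omega)]; exact he
    exact ha n.toNat (by omega) h2

lemma fg_key (K : Type*) [Field K] (a : K) (ha0 : a ≠ 0)
    (ha : ∀ n : ℕ, 0 < n → a ^ n ≠ 1)
    (B : Type*) [Ring B] [Algebra K B]
    (x : ℤ × ℤ → B)
    (hsym : ∀ p q : ℤ, x (-p, -q) = x (p, q))
    (hprod : ∀ p q r s : ℤ,
      x (p, q) * x (r, s)
        = a ^ (p * s - q * r) • x (p + r, q + s)
          + a ^ (-(p * s - q * r)) • x (p - r, q - s))
    (p q r s : ℤ) (hd : p * s - q * r ≠ 0) :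
    x (p + r, q + s) - x (p - r, q - s) ∈
      Submodule.span K {z : B | ∃ u v : B, z = u * v - v * u} := by
  set d : ℤ := p * s - q * r with hdd
  set c : K := a ^ d - a ^ (-d) with hc
  have hcne : c ≠ 0 := by
    intro h
    have heq : a ^ d = a ^ (-d) := by
      have := sub_eq_zero.mp h; exact this
    have : a ^ (2 * d) = 1 := by
      calc a ^ (2 * d) = a ^ d * a ^ d := by rw [two_mul, zpow_add₀ ha0]
        _ = a ^ (-d) * a ^ d := by nth_rewrite 1 [heq]; rfl
        _ = 1 := by rw [← zpow_add₀ ha0, neg_add_cancel, zpow_zero]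
    exact fg_zpow_ne_one a ha0 ha (2 * d) (by omega) this
  set X := x (p + r, q + s)
  set Y := x (p - r, q - s)
  have hz : x (p, q) * x (r, s) - x (r, s) * x (p, q) = c • (X - Y) := by
    rw [hprod p q r s, hprod r s p q]
    have h1 : x (r + p, s + q) = X := by rw [add_comm r p, add_comm s q]
    have h2 : x (r - p, s - q) = Y := by
      rw [show r - p = -(p - r) by ring, show s - q = -(q - s) by ring, hsym]
    have h3 : r * q - s * p = -d := by rw [hdd]; ring
    rw [h1, h2, h3, neg_neg, ← hdd]
    rw [hc, sub_smul, smul_sub, smul_sub]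
    abel
  have hzmem : x (p, q) * x (r, s) - x (r, s) * x (p, q) ∈
      Submodule.span K {z : B | ∃ u v : B, z = u * v - v * u} :=
    Submodule.subset_span ⟨x (p, q), x (r, s), rfl⟩
  have : X - Y = c⁻¹ • (x (p, q) * x (r, s) - x (r, s) * x (p, q)) := by
    rw [hz, smul_smul, inv_mul_cancel₀ hcne, one_smul]
  rw [this]
  exact Submodule.smul_mem _ _ hzmem

/-- Frohman–Gelca relations: in the abelianization of the skein algebra of the
2-torus, `(p+2, q)_T = (p, q)_T` whenever `q ≠ 0`, and `(p, q+2)_T = (p, q)_T`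
whenever `p ≠ 0`. -/
theorem frohman_gelca_shift (K : Type*) [Field K] (a : K) (ha0 : a ≠ 0)
    (ha : ∀ n : ℕ, 0 < n → a ^ n ≠ 1)
    (B : Type*) [Ring B] [Algebra K B]
    (x : ℤ × ℤ → B)
    (hsym : ∀ p q : ℤ, x (-p, -q) = x (p, q))
    (hprod : ∀ p q r s : ℤ,
      x (p, q) * x (r, s)
        = a ^ (p * s - q * r) • x (p + r, q + s)
          + a ^ (-(p * s - q * r)) • x (p - r, q - s)) :
    (∀ p q : ℤ, q ≠ 0 →
        x (p + 2, q) - x (p, q) ∈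
          Submodule.span K {z : B | ∃ u v : B, z = u * v - v * u}) ∧
    (∀ p q : ℤ, p ≠ 0 →
        x (p, q + 2) - x (p, q) ∈
          Submodule.span K {z : B | ∃ u v : B, z = u * v - v * u}) := by
  constructor
  · intro p q hq
    have := fg_key K a ha0 ha B x hsym hprod (p + 1) q 1 0 (by simpa using hq)
    rw [show p + 1 + 1 = p + 2 by ring] at this
    simpa using this
  · intro p q hp
    have := fg_key K a ha0 ha B x hsym hprod p (q + 1) 0 1 (by simpa using hp)
    rw [show q + 1 + 1 = q + 2 by ring] at this
    simpa using this
end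

section
/- Let K be a field and a ∈ K a nonzero element which is not a root of unity (aⁿ ≠ 1 for every integer n > 0). Let B be an associative K-algebra and let x : ℤ × ℤ → B satisfy x(−p,−q) = x(p,q) for all (p,q) and the product rule x(p,q)·x(r,s) = a^{ps−qr}·x(p+r, q+s) + a^{−(ps−qr)}·x(p−r, q−s) for all integers p, q, r, s. Then for every (p,q) ≠ (0,0), modulo the K-submodule [B,B] of B spanned by all commutators uv − vu: x(p,q) ≡ x(1,0) if p is odd and q is even; x(p,q) ≡ x(0,1) if p is even and q is odd; x(p,q) ≡ x(1,1) if p and q are both odd; and x(p,q) ≡ x(2,0) if p and q are both even. -/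
/-- In the abelianization of the skein algebra of the 2-torus, every `(p,q)_T` with
`(p,q) ≠ (0,0)` is congruent, modulo commutators, to one of `(1,0)_T`, `(0,1)_T`,
`(1,1)_T`, `(2,0)_T`, according to the parities of `p` and `q`. -/
theorem frohman_gelca_parity (K : Type*) [Field K] (a : K) (ha0 : a ≠ 0)
    (ha : ∀ n : ℕ, 0 < n → a ^ n ≠ 1)
    (B : Type*) [Ring B] [Algebra K B]
    (x : ℤ × ℤ → B)
    (hsym : ∀ p q : ℤ, x (-p, -q) = x (p, q))
    (hprod : ∀ p q r s : ℤ,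
      x (p, q) * x (r, s)
        = a ^ (p * s - q * r) • x (p + r, q + s)
          + a ^ (-(p * s - q * r)) • x (p - r, q - s)) :
    ∀ p q : ℤ, (p, q) ≠ (0, 0) →
      ((Odd p ∧ Even q →
          x (p, q) - x (1, 0) ∈
            Submodule.span K {z : B | ∃ u v : B, z = u * v - v * u}) ∧
       (Even p ∧ Odd q →
          x (p, q) - x (0, 1) ∈
            Submodule.span K {z : B | ∃ u v : B, z = u * v - v * u}) ∧
       (Odd p ∧ Odd q →
          x (p, q) - x (1, 1) ∈
            Submodule.span K {z : B | ∃ u v : B, z = u * v - v * u}) ∧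
       (Even p ∧ Even q →
          x (p, q) - x (2, 0) ∈
            Submodule.span K {z : B | ∃ u v : B, z = u * v - v * u})) := by
  set C := Submodule.span K {z : B | ∃ u v : B, z = u * v - v * u} with hCdef
  -- a^m ≠ 1 for nonzero integers m
  have hz : ∀ m : ℤ, m ≠ 0 → a ^ m ≠ 1 := by
    intro m hm he
    rcases lt_or_gt_of_ne hm with h | h
    · have he' : a ^ (-m) = 1 := by rw [zpow_neg, he, inv_one]
      have h2 : a ^ (-m).toNat = 1 := by
        have : a ^ ((((-m).toNat : ℕ)) : ℤ) = 1 := by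
          rw [Int.toNat_of_nonneg (by omega)]; exact he'
        rwa [zpow_natCast] at this
      exact ha (-m).toNat (by omega) h2
    · have h2 : a ^ m.toNat = 1 := by
        have : a ^ (((m.toNat : ℕ)) : ℤ) = 1 := by
          rw [Int.toNat_of_nonneg (by omega)]; exact he
        rwa [zpow_natCast] at this
      exact ha m.toNat (by omega) h2
  -- main step: if ps - qr ≠ 0 then x(p+r,q+s) ≡ x(p-r,q-s) mod commutators
  have step : ∀ p q r s : ℤ, p * s - q * r ≠ 0 →
      x (p + r, q + s) - x (p - r, q - s) ∈ C := by
    intro p q r s hd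
    have hc : x (p, q) * x (r, s) - x (r, s) * x (p, q) ∈ C :=
      Submodule.subset_span ⟨_, _, rfl⟩
    have e1 := hprod p q r s
    have e2 := hprod r s p q
    have hrs : r * q - s * p = -(p * s - q * r) := by ring
    have hsym' : x (r - p, s - q) = x (p - r, q - s) := by
      have := hsym (p - r) (q - s)
      rw [← this]; congr 1
      simp only [Prod.mk.injEq]
      constructor <;> ring
    rw [hrs, neg_neg, add_comm r p, add_comm s q, hsym'] at e2
    set d := p * s - q * r with hdd
    have key : x (p, q) * x (r, s) - x (r, s) * x (p, q)
        = (a ^ d - a ^ (-d)) • (x (p + r, q + s) - x (p - r, q - s)) := by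
      rw [e1, e2]
      module
    rw [key] at hc
    have hne : a ^ d - a ^ (-d) ≠ 0 := by
      rw [sub_ne_zero]
      intro heq
      have h1 : a ^ (2 * d) = 1 := by
        have : a ^ (d + d) = a ^ d * a ^ d := zpow_add₀ ha0 d d
        rw [show 2 * d = d + d by ring, this]
        nth_rewrite 2 [heq]
        rw [← zpow_add₀ ha0, show d + -d = 0 by ring, zpow_zero]
      exact hz (2 * d) (by omega) h1
    have := C.smul_mem (a ^ d - a ^ (-d))⁻¹ hc
    rwa [inv_smul_smul₀ hne] at this
  -- same parity + linear independence gives congruence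
  have step2 : ∀ p q p' q' : ℤ, (p - p') % 2 = 0 → (q - q') % 2 = 0 →
      p * q' ≠ q * p' → x (p, q) - x (p', q') ∈ C := by
    intro p q p' q' hp hq hind
    obtain ⟨k, hk⟩ : ∃ k, p = p' + 2 * k := ⟨(p - p') / 2, by omega⟩
    obtain ⟨l, hl⟩ : ∃ l, q = q' + 2 * l := ⟨(q - q') / 2, by omega⟩
    subst hk hl
    have hd : (p' + k) * l - (q' + l) * k ≠ 0 := by
      intro h
      exact hind (by linear_combination (-2 : ℤ) * h)
    have h := step (p' + k) (q' + l) k l hd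
    have e1 : p' + k + k = p' + 2 * k := by ring
    have e2 : q' + l + l = q' + 2 * l := by ring
    have e3 : p' + k - k = p' := by ring
    have e4 : q' + l - l = q' := by ring
    rwa [e1, e2, e3, e4] at h
  intro p q hpq
  have hne : ¬(p = 0 ∧ q = 0) := by
    rintro ⟨h1, h2⟩; exact hpq (by rw [h1, h2])
  -- helper: go to target (t1,t2), possibly via midpoint (m1,m2)
  have final : ∀ t1 t2 m1 m2 : ℤ, (p - t1) % 2 = 0 → (q - t2) % 2 = 0 →
      (m1 - t1) % 2 = 0 → (m2 - t2) % 2 = 0 →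
      m1 * t2 ≠ m2 * t1 →
      (p * t2 = q * t1 → p * m2 ≠ q * m1) →
      x (p, q) - x (t1, t2) ∈ C := by
    intro t1 t2 m1 m2 h1 h2 h3 h4 hmt hcase
    by_cases hcol : p * t2 = q * t1
    · have A := step2 p q m1 m2 (by omega) (by omega) (hcase hcol)
      have Bb := step2 m1 m2 t1 t2 h3 h4 hmt
      have := C.add_mem A Bb
      rwa [sub_add_sub_cancel] at this
    · exact step2 p q t1 t2 h1 h2 hcol
  refine ⟨fun ⟨ho, heq⟩ => ?_, fun ⟨heq, ho⟩ => ?_, fun ⟨ho, ho'⟩ => ?_,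
    fun ⟨heq, heq'⟩ => ?_⟩
  · rw [Int.odd_iff] at ho; rw [Int.even_iff] at heq
    exact final 1 0 1 2 (by omega) (by omega) (by omega) (by omega)
      (by decide) (fun h => by omega)
  · rw [Int.even_iff] at heq; rw [Int.odd_iff] at ho
    exact final 0 1 2 1 (by omega) (by omega) (by omega) (by omega)
      (by decide) (fun h => by omega)
  · rw [Int.odd_iff] at ho; rw [Int.odd_iff] at ho'
    exact final 1 1 1 3 (by omega) (by omega) (by omega) (by omega)
      (by decide) (fun h => by omega)
  · rw [Int.even_iff] at heq; rw [Int.even_iff] at heq'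
    exact final 2 0 2 2 (by omega) (by omega) (by omega) (by omega)
      (by decide) (fun h => by omega)
end

section
/- Let m₁,…,m_h and n₁,…,n_k be natural numbers with m₁+⋯+m_h = n₁+⋯+n_k. For j ≥ 1 let p_j(X) = Σ_{l=0}^{j−1} X^{2l} ∈ ℂ[X]. Then, as a difference of integers, rootMultiplicity of i in ∏_{a=1}^{h} ∏_{j=1}^{m_a} p_j minus rootMultiplicity of i in ∏_{b=1}^{k} ∏_{j=1}^{n_b} p_j equals ⌊(#{b : n_b is odd})/2⌋ − ⌊(#{a : m_a is odd})/2⌋. Equivalently, the order at q = i of the generalized quantum multinomial [m₁,…,m_h ; n₁,…,n_k] = ([m₁]!⋯[m_h]!)/([n₁]!⋯[n_k]!) equals ⌊#{odd n_b}/2⌋ − ⌊#{odd m_a}/2⌋. -/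
open Polynomial Finset

private noncomputable def Pq (j : ℕ) : Polynomial ℂ := ∑ l ∈ Finset.range j, (X : Polynomial ℂ) ^ (2 * l)

private lemma Pq_ne_zero {j : ℕ} (hj : j ≠ 0) : Pq j ≠ 0 := by
  intro h
  have : (Pq j).eval 1 = 0 := by rw [h]; simp
  rw [Pq] at this
  simp [eval_finset_sum] at this
  exact hj this

private lemma Pq_mul : ∀ j : ℕ, Pq j * ((X : Polynomial ℂ)^2 - 1) = X ^ (2*j) - 1 := by
  intro j
  have := geom_sum_mul ((X : Polynomial ℂ)^2) j
  rw [Pq]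
  simpa [← pow_mul, mul_comm] using this

private lemma rm_Pq {j : ℕ} (hj : j ≠ 0) :
    rootMultiplicity Complex.I (Pq j) = if Even j then 1 else 0 := by
  by_cases hev : Even j
  · simp only [hev, if_true]
    have hne : (X : Polynomial ℂ) ^ (2*j) - 1 ≠ 0 := by
      intro h
      have := congrArg (eval 0) h
      simp [(by positivity : 0 < 2*j).ne'] at this
    have hroot : IsRoot ((X : Polynomial ℂ)^(2*j) - 1) Complex.I := by
      simp [IsRoot, pow_mul, Complex.I_sq, hev.neg_one_pow]
    have h1 : rootMultiplicity Complex.I ((X : Polynomial ℂ)^(2*j) - 1) = 1 := by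
      have hge : 0 < rootMultiplicity Complex.I ((X : Polynomial ℂ)^(2*j) - 1) :=
        (rootMultiplicity_pos hne).2 hroot
      have hle : ¬ 1 < rootMultiplicity Complex.I ((X : Polynomial ℂ)^(2*j) - 1) := by
        intro hlt
        have hd := isRoot_iterate_derivative_of_lt_rootMultiplicity hlt
        simp only [Function.iterate_one, IsRoot, derivative_sub, derivative_one,
          derivative_X_pow, sub_zero, eval_mul, eval_pow, eval_C, eval_X,
          eval_natCast, mul_eq_zero] at hd
        rcases hd with h | h
        · have : ((2*j : ℕ) : ℂ) = 0 := by exact_mod_cast h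
          have h2 : (2*j : ℕ) = 0 := by exact_mod_cast this
          omega
        · exact pow_ne_zero _ Complex.I_ne_zero h
      omega
    have hx2 : rootMultiplicity Complex.I ((X : Polynomial ℂ)^2 - 1) = 0 := by
      apply rootMultiplicity_eq_zero
      simp [IsRoot, Complex.I_sq]
      norm_num
    have := rootMultiplicity_mul (x := Complex.I) (Pq_mul j ▸ hne)
    rw [Pq_mul j, hx2, add_zero] at this
    omega
  · simp only [hev, if_false]
    apply rootMultiplicity_eq_zero
    simp only [IsRoot, Pq, eval_finset_sum, eval_pow, eval_X, pow_mul, Complex.I_sq,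
      neg_one_geom_sum, hev, if_false]
    norm_num

private lemma rm_prod {ι : Type*} (s : Finset ι) (f : ι → Polynomial ℂ)
    (hf : ∀ i ∈ s, f i ≠ 0) (x : ℂ) :
    rootMultiplicity x (∏ i ∈ s, f i) = ∑ i ∈ s, rootMultiplicity x (f i) := by
  classical
  induction s using Finset.cons_induction with
  | empty => simp
  | cons a s ha ih =>
    rw [Finset.prod_cons, Finset.sum_cons,
      rootMultiplicity_mul (mul_ne_zero (hf a (Finset.mem_cons_self a s))
        (Finset.prod_ne_zero_iff.2 fun i hi => hf i (Finset.mem_cons_of_mem hi))),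
      ih (fun i hi => hf i (Finset.mem_cons_of_mem hi))]

private lemma sum_even_Icc (M : ℕ) :
    (∑ j ∈ Finset.Icc 1 M, if Even j then 1 else 0) = M / 2 := by
  induction M with
  | zero => simp
  | succ M ih =>
    rw [show Finset.Icc 1 (M+1) = insert (M+1) (Finset.Icc 1 M) by
        ext x; simp [Finset.mem_Icc]; omega,
      Finset.sum_insert (by simp), ih]
    rcases Nat.even_or_odd (M+1) with hM | hM
    · have := Nat.even_iff.1 hM
      simp only [hM, if_true]; omega
    · have := Nat.odd_iff.1 hM
      simp only [Nat.not_even_iff_odd.2 hM, if_false]; omega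

private lemma rm_Icc (M : ℕ) :
    rootMultiplicity Complex.I (∏ j ∈ Finset.Icc 1 M, Pq j) = M / 2 := by
  rw [rm_prod _ _ (fun j hj => Pq_ne_zero (by simp at hj; omega))]
  have : ∀ j ∈ Finset.Icc 1 M, rootMultiplicity Complex.I (Pq j)
      = if Even j then 1 else 0 := fun j hj => rm_Pq (by simp at hj; omega)
  rw [Finset.sum_congr rfl this, sum_even_Icc]

private lemma card_odd_eq {h : ℕ} (m : Fin h → ℕ) :
    (Finset.univ.filter fun a => Odd (m a)).card = ∑ a, m a % 2 := by
  rw [Finset.card_filter]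
  refine Finset.sum_congr rfl fun a _ => ?_
  rcases Nat.even_or_odd (m a) with hm | hm
  · simp [Nat.not_odd_iff_even.2 hm, Nat.even_iff.1 hm]
  · simp [hm, Nat.odd_iff.1 hm]

/-- The order at `q = i` of a generalized quantum multinomial
`[m₁,…,m_h ; n₁,…,n_k]` equals `⌊#{odd n_b}/2⌋ − ⌊#{odd m_a}/2⌋`. -/
theorem order_I_quantumMultinomial (h k : ℕ) (m : Fin h → ℕ) (n : Fin k → ℕ)
    (hsum : ∑ a, m a = ∑ b, n b) :
    (Polynomial.rootMultiplicity Complex.I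
        (∏ a, ∏ j ∈ Finset.Icc 1 (m a),
          ∑ l ∈ Finset.range j, (Polynomial.X : Polynomial ℂ) ^ (2 * l)) : ℤ)
      - (Polynomial.rootMultiplicity Complex.I
        (∏ b, ∏ j ∈ Finset.Icc 1 (n b),
          ∑ l ∈ Finset.range j, (Polynomial.X : Polynomial ℂ) ^ (2 * l)) : ℤ)
      = (((Finset.univ.filter fun b => Odd (n b)).card / 2 : ℕ) : ℤ)
        - (((Finset.univ.filter fun a => Odd (m a)).card / 2 : ℕ) : ℤ) := by
  have key : ∀ (c : ℕ) (f : Fin c → ℕ),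
      rootMultiplicity Complex.I (∏ a, ∏ j ∈ Finset.Icc 1 (f a),
        ∑ l ∈ Finset.range j, (X : Polynomial ℂ) ^ (2 * l)) = ∑ a, f a / 2 := by
    intro c f
    have hne : ∀ a : Fin c, (∏ j ∈ Finset.Icc 1 (f a), Pq j) ≠ 0 :=
      fun a => Finset.prod_ne_zero_iff.2 fun j hj => Pq_ne_zero (by simp at hj; omega)
    calc rootMultiplicity Complex.I (∏ a, ∏ j ∈ Finset.Icc 1 (f a), Pq j)
        = ∑ a, rootMultiplicity Complex.I (∏ j ∈ Finset.Icc 1 (f a), Pq j) :=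
          rm_prod _ _ (fun a _ => hne a) _
      _ = ∑ a, f a / 2 := Finset.sum_congr rfl fun a _ => rm_Icc (f a)
  rw [key h m, key k n, card_odd_eq m, card_odd_eq n]
  have h1 : ∑ a, m a = ∑ a, (2 * (m a / 2) + m a % 2) :=
    Finset.sum_congr rfl fun a _ => by omega
  have h2 : ∑ b, n b = ∑ b, (2 * (n b / 2) + n b % 2) :=
    Finset.sum_congr rfl fun b _ => by omega
  rw [h1, h2] at hsum
  simp only [Finset.sum_add_distrib, ← Finset.mul_sum] at hsum
  omega
end

section
/- Let n be an odd positive integer and define f : ℂ → ℂ by f(q) = (qⁿ − q⁻ⁿ)/(q − q⁻¹). Then f is differentiable at the imaginary unit i and its derivative vanishes there: deriv f i = 0. -/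
/-!
Write `[n](q) = N(q) / D(q)` with `N(q) = qⁿ − q⁻ⁿ` and `D(q) = q − q⁻¹`. Since
`(qᵐ − q⁻ᵐ)' = m q⁻ᵐ⁻¹ (q²ᵐ + 1)`, the derivative of `qᵐ − q⁻ᵐ` vanishes wherever `q²ᵐ = −1`.
At `q = i` this holds for `m = 1` (the denominator) and for every odd `m = n` (the numerator),
so the quotient rule gives `[n]'(i) = 0` as soon as `D(i) = 2i ≠ 0`.
-/

section QuantumInteger

variable {𝕜 : Type*} [NontriviallyNormedField 𝕜] {q : 𝕜}

theorem hasDerivAt_zpow_sub_zpow_neg_of_zpow_eq_neg_one {m : ℤ} (hq : q ≠ 0)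
    (h : q ^ (2 * m) = -1) :
    HasDerivAt (fun x : 𝕜 => x ^ m - x ^ (-m)) 0 q := by
  refine ((hasDerivAt_zpow m q (Or.inl hq)).fun_sub
    (hasDerivAt_zpow (-m) q (Or.inl hq))).congr_deriv ?_
  have hsplit : q ^ (m - 1) = q ^ (2 * m) * q ^ (-m - 1) := by
    rw [← zpow_add₀ hq]; ring_nf
  rw [hsplit, h]
  push_cast
  ring

theorem hasDerivAt_quantumInteger_of_sq_eq_neg_one {n : ℕ} (hn : Odd n) (hq : q ^ 2 = -1)
    (hD : q - q⁻¹ ≠ 0) :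
    HasDerivAt (fun x : 𝕜 => (x ^ n - x ^ (-(n : ℤ))) / (x - x⁻¹)) 0 q := by
  have hq0 : q ≠ 0 := by rintro rfl; simp at hq
  have hpow (m : ℕ) : q ^ (2 * (m : ℤ)) = (-1) ^ m := by
    rw [zpow_mul, zpow_natCast, ← hq]; norm_cast
  have hNum := hasDerivAt_zpow_sub_zpow_neg_of_zpow_eq_neg_one (m := n) hq0
    (by rw [hpow, hn.neg_one_pow])
  have hDen := hasDerivAt_zpow_sub_zpow_neg_of_zpow_eq_neg_one (m := 1) hq0
    (by simpa using hpow 1)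
  simp only [zpow_natCast, zpow_one, zpow_neg_one] at hNum hDen
  simpa using hNum.fun_div hDen hD

end QuantumInteger

theorem deriv_quantumInteger_at_I_general (n : ℕ) (hodd : Odd n) :
    DifferentiableAt ℂ
        (fun q : ℂ => (q ^ n - q ^ (-(n : ℤ))) / (q - q⁻¹)) Complex.I ∧
    deriv (fun q : ℂ => (q ^ n - q ^ (-(n : ℤ))) / (q - q⁻¹)) Complex.I = 0 := by
  have hD : Complex.I - Complex.I⁻¹ ≠ 0 := by
    rw [Complex.inv_I, sub_neg_eq_add, ← two_mul]
    exact mul_ne_zero two_ne_zero Complex.I_ne_zero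
  have h := hasDerivAt_quantumInteger_of_sq_eq_neg_one hodd Complex.I_sq hD
  exact ⟨h.differentiableAt, h.deriv⟩

/-- For odd `n`, the quantum integer `[n](q) = (qⁿ − q⁻ⁿ)/(q − q⁻¹)` is differentiable
at `q = i` and its derivative vanishes there. -/
theorem deriv_quantumInteger_at_I (n : ℕ) (hn : 0 < n) (hodd : Odd n) :
    DifferentiableAt ℂ
        (fun q : ℂ => (q ^ n - q ^ (-(n : ℤ))) / (q - q⁻¹)) Complex.I ∧
    deriv (fun q : ℂ => (q ^ n - q ^ (-(n : ℤ))) / (q - q⁻¹)) Complex.I = 0 :=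
  deriv_quantumInteger_at_I_general n hodd
end

section
/- Let x₁,…,x_n and y₁,…,y_m be odd nonnegative integers such that Σ_{j=1}^{m} (y_j − 1) ≡ Σ_{i=1}^{n} (x_i − 1) (mod 4). Define, on a neighborhood of the imaginary unit i in ℂ, f(q) = ∏_{i=1}^{n} (q^{x_i} − q^{−x_i})/(q − q⁻¹) − ∏_{j=1}^{m} (q^{y_j} − q^{−y_j})/(q − q⁻¹). Then f has a zero of order at least 2 at q = i; that is, f(i) = 0 and deriv f i = 0. -/
/-!
For odd `n` the quantum integer `[n]` is invariant under the involution `q ↦ -q⁻¹`, which fixes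
`i` and has derivative `-1` there; by the chain rule `[n]'(i) = -[n]'(i)`, so `[n]'(i) = 0`, and
therefore both products have vanishing derivative at `i`. Their values at `i` are
`i ^ Σ (x_k - 1)` and `i ^ Σ (y_k - 1)`, which agree because `i` has order `4`.
-/

open Complex

noncomputable def quantumInt (n : ℕ) (q : ℂ) : ℂ := (q ^ n - q ^ (-(n : ℤ))) / (q - q⁻¹)

lemma quantumInt_neg_inv {n : ℕ} (hn : Odd n) (q : ℂ) :
    quantumInt n (-q⁻¹) = quantumInt n q := by
  simp only [quantumInt, zpow_neg, zpow_natCast, hn.neg_pow, inv_pow, inv_neg, inv_inv]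
  ring

lemma differentiableAt_quantumInt (n : ℕ) {q : ℂ} (hq : q - q⁻¹ ≠ 0) :
    DifferentiableAt ℂ (quantumInt n) q := by
  have hq₀ : q ≠ 0 := by
    rintro rfl
    simp at hq
  unfold quantumInt
  fun_prop (disch := first | exact hq | exact Or.inl hq₀ | exact hq₀)

lemma I_sub_inv_I : I - I⁻¹ = 2 * I := by
  rw [inv_I]; ring

lemma quantumInt_I {n : ℕ} (hn : Odd n) : quantumInt n I = I ^ (n - 1) := by
  obtain ⟨k, rfl⟩ := hn
  rw [quantumInt, I_sub_inv_I, zpow_neg, zpow_natCast]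
  simp only [Nat.add_sub_cancel, pow_succ, pow_mul, I_sq]
  field_simp
  rw [← pow_mul, mul_comm k, pow_mul, neg_one_sq, one_pow, I_sq]
  ring

lemma hasDerivAt_quantumInt_I {n : ℕ} (hn : Odd n) : HasDerivAt (quantumInt n) 0 I := by
  have hdiff : DifferentiableAt ℂ (quantumInt n) I :=
    differentiableAt_quantumInt n (by rw [I_sub_inv_I]; simp)
  have hinv : HasDerivAt (fun q : ℂ => -q⁻¹) (-1) I := by
    simpa using (hasDerivAt_inv I_ne_zero).fun_neg
  have hfix : -I⁻¹ = I := by simp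
  have hcomp := (hfix ▸ hdiff.hasDerivAt).comp I hinv
  rw [show quantumInt n ∘ (fun q : ℂ => -q⁻¹) = quantumInt n from
    funext (quantumInt_neg_inv hn)] at hcomp
  have hsign := hcomp.unique hdiff.hasDerivAt
  rw [hfix] at hsign
  have h0 : deriv (quantumInt n) I = 0 := by linear_combination -hsign / 2
  exact h0 ▸ hdiff.hasDerivAt

lemma prod_quantumInt_I {ι : Type*} (s : Finset ι) {x : ι → ℕ} (hx : ∀ i ∈ s, Odd (x i)) :
    ∏ i ∈ s, quantumInt (x i) I = I ^ ∑ i ∈ s, (x i - 1) := by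
  rw [Finset.prod_congr rfl fun i hi => quantumInt_I (hx i hi), Finset.prod_pow_eq_pow_sum]

lemma hasDerivAt_prod_quantumInt_I {ι : Type*} (s : Finset ι) {x : ι → ℕ}
    (hx : ∀ i ∈ s, Odd (x i)) : HasDerivAt (fun q => ∏ i ∈ s, quantumInt (x i) q) 0 I := by
  classical
  simpa using HasDerivAt.fun_finsetProd fun i hi => hasDerivAt_quantumInt_I (hx i hi)

/-- If `x₁,…,x_N` and `y₁,…,y_M` are odd with `Σ(y_j−1) ≡ Σ(x_i−1) (mod 4)`, then the
difference of the products of the corresponding quantum integers has a zero of order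
at least `2` at `q = i`. -/
theorem order_two_zero_of_odd_quantumIntegers (N M : ℕ) (x : Fin N → ℕ) (y : Fin M → ℕ)
    (hx : ∀ i, Odd (x i)) (hy : ∀ j, Odd (y j))
    (hmod : (∑ j, (y j - 1)) ≡ (∑ i, (x i - 1)) [MOD 4])
    (f : ℂ → ℂ)
    (hf : f = fun q : ℂ =>
      (∏ i, (q ^ (x i) - q ^ (-(x i : ℤ))) / (q - q⁻¹))
        - ∏ j, (q ^ (y j) - q ^ (-(y j : ℤ))) / (q - q⁻¹)) :
    f Complex.I = 0 ∧ deriv f Complex.I = 0 := by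
  replace hf : f = fun q => ∏ i, quantumInt (x i) q - ∏ j, quantumInt (y j) q := hf
  subst hf
  constructor
  · dsimp only
    rw [prod_quantumInt_I _ fun i _ => hx i, prod_quantumInt_I _ fun j _ => hy j,
      pow_eq_pow_of_modEq hmod I_pow_four, sub_self]
  · exact ((hasDerivAt_prod_quantumInt_I _ fun i _ => hx i).fun_sub
      (hasDerivAt_prod_quantumInt_I _ fun j _ => hy j)).deriv.trans (sub_self 0)
end
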